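/- Let M ≥ 1, let P be an M×M complex matrix with P² = P, and let V be a 2×2 complex unitary matrix; set U := V·V. Define on ℂ^M⊗ℂ²⊗ℂ² the matrices G₁ := I_M ⊗ (|0⟩⟨0|⊗I₂ + |1⟩⟨1|⊗V), G₂ := (I_M − P)⊗I₂⊗I₂ + P⊗σx⊗I₂, G₃ := I_M ⊗ (|0⟩⟨0|⊗I₂ + |1⟩⟨1|⊗V†), and G₅ := (I_M − P)⊗I₂⊗I₂ + P⊗I₂⊗V. Then G₅ · G₂ · G₃ · G₂ · G₁ = I_{4M} + P ⊗ |1⟩⟨1| ⊗ (U − I₂). -/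

import Mathlib

open Matrix Complex Kronecker

/-- The NOT gate `σx`. -/
def σx : Matrix (Fin 2) (Fin 2) ℂ := !![0, 1; 1, 0]

/-- The projector `|0⟩⟨0|`. -/
def P0 : Matrix (Fin 2) (Fin 2) ℂ := !![1, 0; 0, 0]

/-- The projector `|1⟩⟨1|`. -/
def P1 : Matrix (Fin 2) (Fin 2) ℂ := !![0, 0; 0, 1]

/-!
Every factor is block diagonal with respect to `P`, so the product can be computed separately on
the ranges of `1 - P` and of `P`. Write `C(W) = |0⟩⟨0|⊗I₂ + |1⟩⟨1|⊗W` for the controlled-`W` gate.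
On the range of `1 - P` only `G₃·G₁ = C(V†)·C(V) = C(V†V) = I` survives. On the range of `P`,
conjugation by `σx⊗I₂` exchanges `|0⟩⟨0|` and `|1⟩⟨1|`, so the product becomes
`(I₂⊗V)·(|0⟩⟨0|⊗V† + |1⟩⟨1|⊗I₂)·C(V) = |0⟩⟨0|⊗VV† + |1⟩⟨1|⊗V² = C(V²)`.
-/

namespace Matrix

variable {m n R : Type*} [DecidableEq m] [CommRing R]

/-- For a projection `P`, the operator acting as `A` on the range of `1 - P` and as `B` on the
range of `P`; `controlled P1 1 W` is the controlled-`W` gate. -/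
def controlled (P : Matrix m m R) (A B : Matrix n n R) : Matrix (m × n) (m × n) R :=
  (1 - P) ⊗ₖ A + P ⊗ₖ B

theorem controlled_mul_controlled [Fintype m] [Fintype n] {P : Matrix m m R}
    (hP : IsIdempotentElem P) (A B A' B' : Matrix n n R) :
    controlled P A B * controlled P A' B' = controlled P (A * A') (B * B') := by
  simp only [controlled, add_mul, mul_add, ← mul_kronecker_mul, hP.eq, hP.one_sub.eq,
    hP.mul_one_sub_self, hP.one_sub_mul_self, zero_kronecker, add_zero, zero_add]

theorem one_kronecker_eq_controlled (P : Matrix m m R) (A : Matrix n n R) :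
    (1 : Matrix m m R) ⊗ₖ A = controlled P A A := by
  rw [controlled, ← add_kronecker, sub_add_cancel]

theorem controlled_one_left [DecidableEq n] (P : Matrix m m R) (B : Matrix n n R) :
    controlled P 1 B = 1 + P ⊗ₖ (B - 1) :=
  calc (1 - P) ⊗ₖ 1 + P ⊗ₖ B = (1 - P) ⊗ₖ 1 + (P ⊗ₖ 1 + P ⊗ₖ (B - 1)) := by
        rw [← kronecker_add, add_sub_cancel]
    _ = ((1 - P) + P) ⊗ₖ 1 + P ⊗ₖ (B - 1) := by rw [add_kronecker, add_assoc]
    _ = 1 + P ⊗ₖ (B - 1) := by rw [sub_add_cancel, one_kronecker_one]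

theorem kronecker_one_mul_controlled_mul_kronecker_one [Fintype m] [Fintype n] [DecidableEq n]
    {P S : Matrix m m R} (hS : S * S = 1) (hSP : S * P * S = 1 - P) (A B : Matrix n n R) :
    S ⊗ₖ (1 : Matrix n n R) * controlled P A B * S ⊗ₖ (1 : Matrix n n R) = controlled P B A := by
  have hS1P : S * (1 - P) * S = P := by rw [mul_sub, sub_mul, mul_one, hS, hSP, sub_sub_cancel]
  simp only [controlled, add_mul, mul_add, ← mul_kronecker_mul, one_mul, mul_one, hSP, hS1P,
    add_comm]

theorem controlled_one_one [DecidableEq n] (P : Matrix m m R) :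
    controlled P 1 1 = (1 : Matrix (m × n) (m × n) R) := by
  rw [controlled_one_left, sub_self, kronecker_zero, add_zero]

end Matrix

theorem isIdempotentElem_P1 : IsIdempotentElem P1 := by
  rw [IsIdempotentElem, P1, mul_fin_two]
  simp

theorem P0_eq_one_sub_P1 : P0 = 1 - P1 := by
  simp [P0, P1, one_fin_two]

theorem σx_mul_σx : σx * σx = 1 := by
  simp [σx, one_fin_two]

theorem σx_mul_P1_mul_σx : σx * P1 * σx = 1 - P1 := by
  simp [σx, P1, one_fin_two]

theorem controlled_controlled_mul_self_decomposition {m : Type*} [Fintype m] [DecidableEq m]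
    {P : Matrix m m ℂ} (hP : IsIdempotentElem P) {V : Matrix (Fin 2) (Fin 2) ℂ}
    (hV : V ∈ unitaryGroup (Fin 2) ℂ) :
    controlled P 1 (1 ⊗ₖ V) * controlled P 1 (σx ⊗ₖ 1) * (1 ⊗ₖ controlled P1 1 Vᴴ)
        * controlled P 1 (σx ⊗ₖ 1) * (1 ⊗ₖ controlled P1 1 V)
      = controlled P 1 (controlled P1 1 (V * V)) := by
  have hV_left : Vᴴ * V = 1 := mem_unitaryGroup_iff'.mp hV
  have hV_right : V * Vᴴ = 1 := mem_unitaryGroup_iff.mp hV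
  simp only [one_kronecker_eq_controlled P (controlled P1 _ _), controlled_mul_controlled hP,
    one_mul, mul_one]
  congr 1
  · rw [controlled_mul_controlled isIdempotentElem_P1, one_mul, hV_left, controlled_one_one]
  · calc _ = 1 ⊗ₖ V * (σx ⊗ₖ 1 * controlled P1 1 Vᴴ * σx ⊗ₖ 1) * controlled P1 1 V := by
          simp only [mul_assoc]
      _ = controlled P1 V V * controlled P1 Vᴴ 1 * controlled P1 1 V := by
          rw [kronecker_one_mul_controlled_mul_kronecker_one σx_mul_σx σx_mul_P1_mul_σx,
            one_kronecker_eq_controlled P1]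
      _ = controlled P1 1 (V * V) := by
          rw [controlled_mul_controlled isIdempotentElem_P1,
            controlled_mul_controlled isIdempotentElem_P1, hV_right, mul_one, mul_one]

theorem multi_controlled_gate_decomposition_general (M : ℕ)
    (P : Matrix (Fin M) (Fin M) ℂ) (hP : P * P = P)
    (V : Matrix (Fin 2) (Fin 2) ℂ) (hV : V ∈ Matrix.unitaryGroup (Fin 2) ℂ) :
    (((1 : Matrix (Fin M) (Fin M) ℂ) - P) ⊗ₖ (1 : Matrix (Fin 2) (Fin 2) ℂ)
          ⊗ₖ (1 : Matrix (Fin 2) (Fin 2) ℂ)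
        + (P ⊗ₖ (1 : Matrix (Fin 2) (Fin 2) ℂ)) ⊗ₖ V)              -- G₅
      * (((1 : Matrix (Fin M) (Fin M) ℂ) - P) ⊗ₖ (1 : Matrix (Fin 2) (Fin 2) ℂ)
          ⊗ₖ (1 : Matrix (Fin 2) (Fin 2) ℂ)
        + (P ⊗ₖ σx) ⊗ₖ (1 : Matrix (Fin 2) (Fin 2) ℂ))            -- G₂
      * (((1 : Matrix (Fin M) (Fin M) ℂ) ⊗ₖ P0) ⊗ₖ (1 : Matrix (Fin 2) (Fin 2) ℂ)
        + ((1 : Matrix (Fin M) (Fin M) ℂ) ⊗ₖ P1) ⊗ₖ Vᴴ)           -- G₃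
      * (((1 : Matrix (Fin M) (Fin M) ℂ) - P) ⊗ₖ (1 : Matrix (Fin 2) (Fin 2) ℂ)
          ⊗ₖ (1 : Matrix (Fin 2) (Fin 2) ℂ)
        + (P ⊗ₖ σx) ⊗ₖ (1 : Matrix (Fin 2) (Fin 2) ℂ))            -- G₂
      * (((1 : Matrix (Fin M) (Fin M) ℂ) ⊗ₖ P0) ⊗ₖ (1 : Matrix (Fin 2) (Fin 2) ℂ)
        + ((1 : Matrix (Fin M) (Fin M) ℂ) ⊗ₖ P1) ⊗ₖ V)            -- G₁
    = (1 : Matrix ((Fin M × Fin 2) × Fin 2) ((Fin M × Fin 2) × Fin 2) ℂ)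
        + (P ⊗ₖ P1) ⊗ₖ (V * V - 1) := by
  have key := controlled_controlled_mul_self_decomposition hP hV
  rw [controlled_one_left P (controlled P1 1 _), controlled_one_left P1 (V * V),
    add_sub_cancel_left] at key
  -- Reassociated as `register × (qubit × qubit)`, each factor is a `controlled P` block operator.
  apply (reindexAlgEquiv ℂ ℂ (Equiv.prodAssoc (Fin M) (Fin 2) (Fin 2))).injective
  simp only [map_mul, map_add, map_one, coe_reindexAlgEquiv, kronecker_assoc, one_kronecker_one,
    ← kronecker_add, P0_eq_one_sub_P1]
  exact key

/-- Decomposition of a multi-controlled gate, controlled on the range of a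
projection `P` of an `M`-dimensional control register and on the state `|1⟩` of
a middle qubit, applying `U = V·V` to the last qubit:
`G₅·G₂·G₃·G₂·G₁ = I + P⊗|1⟩⟨1|⊗(U−I₂)`.  Factors are associated as
`(register × middle qubit) × last qubit`. -/
theorem multi_controlled_gate_decomposition (M : ℕ) (hM : 1 ≤ M)
    (P : Matrix (Fin M) (Fin M) ℂ) (hP : P * P = P)
    (V : Matrix (Fin 2) (Fin 2) ℂ) (hV : V ∈ Matrix.unitaryGroup (Fin 2) ℂ) :
    (((1 : Matrix (Fin M) (Fin M) ℂ) - P) ⊗ₖ (1 : Matrix (Fin 2) (Fin 2) ℂ)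
          ⊗ₖ (1 : Matrix (Fin 2) (Fin 2) ℂ)
        + (P ⊗ₖ (1 : Matrix (Fin 2) (Fin 2) ℂ)) ⊗ₖ V)              -- G₅
      * (((1 : Matrix (Fin M) (Fin M) ℂ) - P) ⊗ₖ (1 : Matrix (Fin 2) (Fin 2) ℂ)
          ⊗ₖ (1 : Matrix (Fin 2) (Fin 2) ℂ)
        + (P ⊗ₖ σx) ⊗ₖ (1 : Matrix (Fin 2) (Fin 2) ℂ))            -- G₂
      * (((1 : Matrix (Fin M) (Fin M) ℂ) ⊗ₖ P0) ⊗ₖ (1 : Matrix (Fin 2) (Fin 2) ℂ)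
        + ((1 : Matrix (Fin M) (Fin M) ℂ) ⊗ₖ P1) ⊗ₖ Vᴴ)           -- G₃
      * (((1 : Matrix (Fin M) (Fin M) ℂ) - P) ⊗ₖ (1 : Matrix (Fin 2) (Fin 2) ℂ)
          ⊗ₖ (1 : Matrix (Fin 2) (Fin 2) ℂ)
        + (P ⊗ₖ σx) ⊗ₖ (1 : Matrix (Fin 2) (Fin 2) ℂ))            -- G₂
      * (((1 : Matrix (Fin M) (Fin M) ℂ) ⊗ₖ P0) ⊗ₖ (1 : Matrix (Fin 2) (Fin 2) ℂ)
        + ((1 : Matrix (Fin M) (Fin M) ℂ) ⊗ₖ P1) ⊗ₖ V)            -- G₁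
    = (1 : Matrix ((Fin M × Fin 2) × Fin 2) ((Fin M × Fin 2) × Fin 2) ℂ)
        + (P ⊗ₖ P1) ⊗ₖ (V * V - 1) :=
  multi_controlled_gate_decomposition_general M P hP V hV
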